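/- arXiv:2110.06711 — 3 statements merged into one kernel-verified Lean document; each statement's English description precedes it below -/
import Mathlib

section
/- Let N ≥ 8 be an integer divisible by 4. If β ∈ ℝ^{N/4} satisfies ψ_odd^{(i,j,k,l)}(β) = 0 for all (i,j,k,l) ∈ S_1, then ψ_odd^{(0,j,k,l)}(β) = 0 for all integers j, k, l with 0 ≤ j ≤ k ≤ l ≤ N/2 − 1 and j + k + l = N. -/
/-- `c_α = cos(απ/N)` -/
noncomputable def cc (N : ℕ) (a : ℤ) : ℝ := Real.cos (a * Real.pi / N)

/-- `ψ_odd^{(i,j,k,l)}(β) = ∑_{s=1}^{N/4} β_s c_{(2s−1)i} c_{(2s−1)j} c_{(2s−1)k} c_{(2s−1)l}`;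
the vector `β : Fin (N/4) → ℝ` is 0-indexed. -/
noncomputable def psiOdd (N : ℕ) (β : Fin (N / 4) → ℝ) (i j k l : ℤ) : ℝ :=
  ∑ s : Fin (N / 4),
    β s * (cc N ((2 * (s : ℕ) + 1 : ℤ) * i) * cc N ((2 * (s : ℕ) + 1 : ℤ) * j) *
      cc N ((2 * (s : ℕ) + 1 : ℤ) * k) * cc N ((2 * (s : ℕ) + 1 : ℤ) * l))

/-- `S₁ = {(0, n+1, N/2−n, N/2−1) : 1 ≤ n ≤ N/4−1}` -/
def S1set (N : ℕ) : Set (ℤ × ℤ × ℤ × ℤ) :=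
  {x | ∃ n : ℤ, 1 ≤ n ∧ n ≤ (N : ℤ) / 4 - 1 ∧
    x = (0, n + 1, (N : ℤ) / 2 - n, (N : ℤ) / 2 - 1)}

/-!
For `j + k + l = N` the three angles `(2s+1)jπ/N`, `(2s+1)kπ/N`, `(2s+1)lπ/N` add up to an odd
multiple of `π`, so product-to-sum turns `ψ_odd^{(0,j,k,l)}(β)` into `-(F 0 + F j + F k + F l)/4`
with `F x = ∑ β_s c_{2(2s+1)x}` (`cosSum`). This `F` satisfies `F (N/2 - x) = -F x`, and the
relations on `S₁` say exactly that `F (n+1) - F n = F 1 - F 0` for `1 ≤ n < N/4`. Hence `F` is affine on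
`[0, N/4]`, vanishes at `N/4` by the symmetry, and so `F x = (x - N/4) (F 1 - F 0)` on the whole
range `[0, N/2]`. The four values then sum to `(j + k + l - N) (F 1 - F 0) = 0`.
-/

open Real

theorem four_mul_cos_mul_cos_mul_cos_of_add_eq_int_mul_pi {A B C : ℝ} {n : ℤ}
    (h : A + B + C = n * π) :
    4 * (cos A * cos B * cos C) = (-1) ^ n * (1 + cos (2 * A) + cos (2 * B) + cos (2 * C)) := by
  have hC : C = n * π - (A + B) := by linarith
  have h2C : 2 * C = n * (2 * π) - 2 * (A + B) := by rw [hC]; ring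
  rw [h2C, cos_int_mul_two_pi_sub, hC, cos_int_mul_pi_sub, cos_two_mul, cos_two_mul,
    cos_two_mul, cos_add]
  linear_combination (-(-1) ^ n * 2 : ℝ) *
    (sin B ^ 2 * sin_sq_add_cos_sq A + (1 - cos A ^ 2) * sin_sq_add_cos_sq B)

theorem eq_sub_mul_of_add_one_of_reflect {F : ℤ → ℝ} {q : ℤ} {d : ℝ}
    (hstep : ∀ n, 0 ≤ n → n < q → F (n + 1) = F n + d) (hreflect : ∀ x, F (2 * q - x) = -F x)
    {x : ℤ} (hx₀ : 0 ≤ x) (hx : x ≤ 2 * q) : F x = (x - q) * d := by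
  have haffine : ∀ n, 0 ≤ n → n ≤ q → F n = F 0 + n * d := by
    intro n hn₀
    induction n, hn₀ using Int.leInduction with
    | base => simp
    | succ n hn₀ ih =>
      intro hn
      rw [hstep n hn₀ (by omega), ih (by omega)]
      push_cast
      ring
  have hq₀ : 0 ≤ q := by omega
  have hFq : F q = 0 := by
    have := hreflect q
    rw [show 2 * q - q = q by ring] at this
    linarith
  have hF₀ : F 0 = -q * d := by linarith [haffine q hq₀ le_rfl]
  rcases le_total x q with hxq | hqx
  · rw [haffine x hx₀ hxq, hF₀]
    ring
  · have := hreflect x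
    rw [haffine (2 * q - x) (by omega) (by omega), hF₀] at this
    push_cast at this
    linarith

noncomputable def cosSum (N : ℕ) (β : Fin (N / 4) → ℝ) (x : ℤ) : ℝ :=
  ∑ s : Fin (N / 4), β s * cc N (2 * (2 * (s : ℕ) + 1) * x)

section

variable {N : ℕ} (β : Fin (N / 4) → ℝ)

theorem psiOdd_zero_eq_cosSum {j k l : ℤ} (h : j + k + l = N) :
    psiOdd N β 0 j k l = -(cosSum N β 0 + cosSum N β j + cosSum N β k + cosSum N β l) / 4 := by
  simp only [psiOdd, cosSum, ← Finset.sum_add_distrib, ← Finset.sum_neg_distrib, Finset.sum_div]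
  refine Finset.sum_congr rfl fun s _ => ?_
  have hN : (N : ℝ) ≠ 0 := by
    have : 0 < N := by have := s.pos; omega
    positivity
  set t : ℤ := 2 * (s : ℕ) + 1
  have hangles : t * j * π / N + t * k * π / N + t * l * π / N = t * π := by
    have hR : (j + k + l : ℝ) = N := by exact_mod_cast h
    rw [← add_div, ← add_div, div_eq_iff hN]
    linear_combination (t : ℝ) * π * hR
  have hprod := four_mul_cos_mul_cos_mul_cos_of_add_eq_int_mul_pi hangles
  rw [(odd_two_mul_add_one _).neg_one_zpow] at hprod
  simp only [cc, t] at hprod ⊢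
  push_cast at hprod ⊢
  simp only [mul_zero, zero_mul, zero_div, cos_zero, mul_div_assoc', ← mul_assoc] at hprod ⊢
  linear_combination β s / 4 * hprod

theorem cosSum_half_sub (hN : 2 ∣ N) (x : ℤ) :
    cosSum N β ((N : ℤ) / 2 - x) = -cosSum N β x := by
  simp only [cosSum, ← Finset.sum_neg_distrib]
  refine Finset.sum_congr rfl fun s _ => ?_
  have hN0 : (N : ℝ) ≠ 0 := by
    have : 0 < N := by have := s.pos; omega
    positivity
  have hhalf : (((N : ℤ) / 2 : ℤ) : ℝ) = N / 2 := by
    rw [Int.cast_div (by exact_mod_cast hN) (by norm_num)]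
    norm_num
  have hangle : ((2 * (2 * (s : ℕ) + 1) * ((N : ℤ) / 2 - x) : ℤ) : ℝ) * π / N =
      ((2 * (s : ℕ) + 1 : ℤ) : ℝ) * π - (2 * (2 * (s : ℕ) + 1) * x : ℤ) * π / N := by
    push_cast [hhalf]
    field_simp
  rw [cc, hangle, cos_int_mul_pi_sub, (odd_two_mul_add_one _).neg_one_zpow, cc]
  ring

theorem cosSum_add_one_of_psiOdd_S1 (hN : 4 ∣ N)
    (hβ : ∀ x ∈ S1set N, psiOdd N β x.1 x.2.1 x.2.2.1 x.2.2.2 = 0)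
    (n : ℤ) (hn₀ : 0 ≤ n) (hn : n < (N : ℤ) / 4) :
    cosSum N β (n + 1) = cosSum N β n + (cosSum N β 1 - cosSum N β 0) := by
  rcases hn₀.eq_or_lt with rfl | hn₁
  · rw [zero_add]
    ring
  have hS1 := hβ _ ⟨n, hn₁, by omega, rfl⟩
  dsimp only at hS1
  have h2 : 2 ∣ N := dvd_trans (by norm_num) hN
  rw [psiOdd_zero_eq_cosSum β (by omega), cosSum_half_sub β h2, cosSum_half_sub β h2] at hS1
  linarith

end

theorem psiOdd_zero_on_T1_of_zero_on_S1_general (N : ℕ) (hN4 : 4 ∣ N)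
    (β : Fin (N / 4) → ℝ)
    (hβ : ∀ x ∈ S1set N, psiOdd N β x.1 x.2.1 x.2.2.1 x.2.2.2 = 0) :
    ∀ j k l : ℤ, 0 ≤ j → j ≤ k → k ≤ l → l ≤ (N : ℤ) / 2 - 1 →
      j + k + l = (N : ℤ) → psiOdd N β 0 j k l = 0 := by
  intro j k l hj hjk hkl hl hjkl
  have hreflect (x : ℤ) : cosSum N β (2 * ((N : ℤ) / 4) - x) = -cosSum N β x := by
    rw [show 2 * ((N : ℤ) / 4) = (N : ℤ) / 2 by omega]
    exact cosSum_half_sub β (by omega) x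
  have hF {x : ℤ} (hx₀ : 0 ≤ x) (hx : x ≤ (N : ℤ) / 2) :
      cosSum N β x = (x - ((N : ℤ) / 4 : ℤ)) * (cosSum N β 1 - cosSum N β 0) :=
    eq_sub_mul_of_add_one_of_reflect (cosSum_add_one_of_psiOdd_S1 β hN4 hβ) hreflect hx₀
      (by omega)
  have hsum : (j + k + l : ℝ) = 4 * ((N : ℤ) / 4 : ℤ) := by
    exact_mod_cast (by omega : j + k + l = 4 * ((N : ℤ) / 4))
  rw [psiOdd_zero_eq_cosSum β hjkl]
  linear_combination (-1 / 4 : ℝ) * (hF le_rfl (by omega) + hF hj (by omega) +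
    hF (x := k) (by omega) (by omega) + hF (x := l) (by omega) (by omega)) +
    (cosSum N β 0 - cosSum N β 1) / 4 * hsum

theorem psiOdd_zero_on_T1_of_zero_on_S1 (N : ℕ) (hN4 : 4 ∣ N) (hN8 : 8 ≤ N)
    (β : Fin (N / 4) → ℝ)
    (hβ : ∀ x ∈ S1set N, psiOdd N β x.1 x.2.1 x.2.2.1 x.2.2.2 = 0) :
    ∀ j k l : ℤ, 0 ≤ j → j ≤ k → k ≤ l → l ≤ (N : ℤ) / 2 - 1 →
      j + k + l = (N : ℤ) → psiOdd N β 0 j k l = 0 :=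
  psiOdd_zero_on_T1_of_zero_on_S1_general N hN4 β hβ
end

section
/- Let N ≥ 8 be an integer divisible by 4. If b ∈ ℝ^{N/2} satisfies ψ^{(i,j,k,l)}(b) = 0 for all (i,j,k,l) ∈ S_1 ∪ S_2, then ψ^{(i,j,k,l)}(b) = 0 for all (i,j,k,l) ∈ S with i ≠ 0. -/
/-- `s_α = sin(απ/N)` -/
noncomputable def ss (N : ℕ) (a : ℤ) : ℝ := Real.sin (a * Real.pi / N)

/-- `f_q^{(i,j,k,l)}` -/
noncomputable def ff (N : ℕ) (i j k l : ℤ) (q : ℕ) : ℝ :=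
  if Odd q then cc N (i * q) * cc N (j * q) * cc N (k * q) * cc N (l * q)
  else ss N (i * q) * ss N (j * q) * ss N (k * q) * ss N (l * q)

/-- `ψ^{(i,j,k,l)}(b)` -/
noncomputable def psi (N : ℕ) (b : Fin (N / 2) → ℝ) (i j k l : ℤ) : ℝ :=
  -∑ q : Fin (N / 2), (-1 : ℝ) ^ ((q : ℕ) + 1) * b q * ff N i j k l ((q : ℕ) + 1)

/-- `S = {(i,j,k,l) : −N_h ≤ i ≤ j ≤ k ≤ l ≤ N_h, i+j+k+l = N}` with `N_h = N/2 − 1`. -/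
def Sset (N : ℕ) : Set (ℤ × ℤ × ℤ × ℤ) :=
  {x | -((N : ℤ) / 2 - 1) ≤ x.1 ∧ x.1 ≤ x.2.1 ∧ x.2.1 ≤ x.2.2.1 ∧
    x.2.2.1 ≤ x.2.2.2 ∧ x.2.2.2 ≤ (N : ℤ) / 2 - 1 ∧
    x.1 + x.2.1 + x.2.2.1 + x.2.2.2 = (N : ℤ)}

/-- `S₂ = {(2−m, m, N/2−1, N/2−1) : m = 1 or 3 ≤ m ≤ N/4+1}` -/
def S2set (N : ℕ) : Set (ℤ × ℤ × ℤ × ℤ) :=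
  {x | ∃ m : ℤ, (m = 1 ∨ (3 ≤ m ∧ m ≤ (N : ℤ) / 4 + 1)) ∧
    x = (2 - m, m, (N : ℤ) / 2 - 1, (N : ℤ) / 2 - 1)}


/-! Product-to-sum formulas turn `8 ψ^{(i,j,k,l)}(b)`, for `i + j + k + l = N`, into the
combination `psiForm W (N/2) i j k l` of values of one even function `W = cosProfile N b`.
The relations on `S₁ ∪ S₂` force all second differences of `W` on `[0, N/2]` to equal
`2 (W 1 - W 0)`, so `W a = W 0 + a² (W 1 - W 0)` for `|a| ≤ N/2`, and `psiForm` kills such a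
quadratic at every `(i, j, k, l)` with `i + j + k + l = N`. -/

open Real

theorem eight_mul_cos_mul_cos_mul_cos_mul_cos_add (x y z : ℝ) :
    8 * (cos x * cos y * cos z * cos (x + y + z)) =
      1 + cos (2 * x) + cos (2 * y) + cos (2 * z) + cos (2 * (x + y)) + cos (2 * (x + z))
        + cos (2 * (y + z)) + cos (2 * (x + y + z)) := by
  have h1 := two_mul_cos_mul_cos x y
  have h2 := two_mul_cos_mul_cos (x + y + z) z
  have h3 := two_mul_cos_mul_cos (x + y) (x - y)
  have h4 := two_mul_cos_mul_cos (x + y + 2 * z) (x + y)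
  have h5 := two_mul_cos_mul_cos (x + y + 2 * z) (x - y)
  have h6 := two_mul_cos_mul_cos (x + y) (x + y)
  ring_nf at h1 h2 h3 h4 h5 h6 ⊢
  rw [cos_zero] at h6
  linear_combination (2 * cos (x + y) + 2 * cos (x - y)) * h2
    + 4 * cos (x + y + z) * cos z * h1 + h3 + h4 + h5 + h6

theorem eight_mul_sin_mul_sin_mul_sin_mul_sin_add (x y z : ℝ) :
    8 * (sin x * sin y * sin z * sin (x + y + z)) =
      -1 + cos (2 * x) + cos (2 * y) + cos (2 * z) - cos (2 * (x + y)) - cos (2 * (x + z))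
        - cos (2 * (y + z)) + cos (2 * (x + y + z)) := by
  have h1 := two_mul_sin_mul_sin x y
  have h2 := two_mul_sin_mul_sin (x + y + z) z
  have h3 := two_mul_cos_mul_cos (x + y) (x - y)
  have h4 := two_mul_cos_mul_cos (x + y + 2 * z) (x + y)
  have h5 := two_mul_cos_mul_cos (x + y + 2 * z) (x - y)
  have h6 := two_mul_cos_mul_cos (x + y) (x + y)
  ring_nf at h1 h2 h3 h4 h5 h6 ⊢
  rw [cos_zero] at h6
  linear_combination (2 * cos (x - y) - 2 * cos (x + y)) * h2
    + 4 * sin (x + y + z) * sin z * h1 + h3 + h4 - h5 - h6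

def psiForm (w : ℤ → ℝ) (D i j k l : ℤ) : ℝ :=
  w i + w j + w k + w l - w D - w (i + j - D) - w (i + k - D) - w (i + l - D)

section Angles

variable {N : ℕ}

theorem cc_neg (a : ℤ) : cc N (-a) = cc N a := by
  simp only [cc, Int.cast_neg, neg_mul, neg_div, cos_neg]

theorem ss_neg (a : ℤ) : ss N (-a) = -ss N a := by
  simp only [ss, Int.cast_neg, neg_mul, neg_div, sin_neg]

theorem cc_sub_mul (hN : N ≠ 0) (a : ℤ) (q : ℕ) : cc N (a - N * q) = (-1) ^ q * cc N a := by
  rw [cc, cc, ← cos_sub_nat_mul_pi]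
  congr 1
  push_cast
  field_simp

theorem ss_sub_mul (hN : N ≠ 0) (a : ℤ) (q : ℕ) : ss N (a - N * q) = (-1) ^ q * ss N a := by
  rw [ss, ss, ← sin_sub_nat_mul_pi]
  congr 1
  push_cast
  field_simp

theorem eight_mul_cc_mul (x y z : ℤ) :
    8 * (cc N x * cc N y * cc N z * cc N (x + y + z)) =
      1 + cc N (2 * x) + cc N (2 * y) + cc N (2 * z) + cc N (2 * (x + y)) + cc N (2 * (x + z))
        + cc N (2 * (y + z)) + cc N (2 * (x + y + z)) := by
  have h := eight_mul_cos_mul_cos_mul_cos_mul_cos_add (x * π / N) (y * π / N) (z * π / N)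
  simp only [cc]
  push_cast
  ring_nf at h ⊢
  exact h

theorem eight_mul_ss_mul (x y z : ℤ) :
    8 * (ss N x * ss N y * ss N z * ss N (x + y + z)) =
      -1 + cc N (2 * x) + cc N (2 * y) + cc N (2 * z) - cc N (2 * (x + y)) - cc N (2 * (x + z))
        - cc N (2 * (y + z)) + cc N (2 * (x + y + z)) := by
  have h := eight_mul_sin_mul_sin_mul_sin_mul_sin_add (x * π / N) (y * π / N) (z * π / N)
  simp only [cc, ss]
  push_cast
  ring_nf at h ⊢
  exact h

theorem neg_eight_mul_ff (hN : N ≠ 0) {D i j k l : ℤ} (hD : (N : ℤ) = 2 * D)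
    (hs : i + j + k + l = N) (q : ℕ) :
    -8 * ff N i j k l q = psiForm (fun a => cc N (2 * (a * q))) D i j k l := by
  have hshift : ∀ a : ℤ, cc N (2 * ((a - D) * q)) = (-1) ^ q * cc N (2 * (a * q)) := fun a => by
    rw [← cc_sub_mul hN, hD]; ring_nf
  have hD' : cc N (2 * (D * q)) = (-1) ^ q := by
    rw [← cc_neg, show -(2 * (D * q)) = 0 - N * q by rw [hD]; ring, cc_sub_mul hN]
    simp [cc]
  have hrefl : ∀ a : ℤ, cc N (2 * ((N - a) * q)) = cc N (2 * (a * q)) := fun a => by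
    rw [← cc_neg, show -(2 * ((N - a) * q)) = 2 * (a * q) - N * (2 * q : ℕ) by push_cast; ring,
      cc_sub_mul hN, pow_mul, neg_one_sq, one_pow, one_mul]
  obtain rfl : l = N - (i + j + k) := by omega
  have hlq : (N - (i + j + k)) * (q : ℤ) = -(i * q + j * q + k * q - N * q) := by ring
  simp only [psiForm, hshift, hD', show i + (N - (i + j + k)) = N - (j + k) by ring, hrefl]
  rcases Nat.even_or_odd q with hq | hq
  · rw [ff, if_neg (Nat.not_odd_iff_even.mpr hq), hlq, ss_neg, ss_sub_mul hN, hq.neg_one_pow]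
    linear_combination (norm := ring_nf) eight_mul_ss_mul (N := N) (i * q) (j * q) (k * q)
  · rw [ff, if_pos hq, hlq, cc_neg, cc_sub_mul hN, hq.neg_one_pow]
    linear_combination (norm := ring_nf) eight_mul_cc_mul (N := N) (i * q) (j * q) (k * q)

end Angles

noncomputable def cosProfile (N : ℕ) (b : Fin (N / 2) → ℝ) (a : ℤ) : ℝ :=
  ∑ q : Fin (N / 2), (-1) ^ ((q : ℕ) + 1) * b q * cc N (2 * (a * ((q : ℕ) + 1 : ℕ)))

theorem cosProfile_neg (N : ℕ) (b : Fin (N / 2) → ℝ) (a : ℤ) :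
    cosProfile N b (-a) = cosProfile N b a := by
  simp only [cosProfile, neg_mul, mul_neg, cc_neg]

theorem eight_mul_psi {N : ℕ} (hN : N ≠ 0) (b : Fin (N / 2) → ℝ) {D i j k l : ℤ}
    (hD : (N : ℤ) = 2 * D) (hs : i + j + k + l = N) :
    8 * psi N b i j k l = psiForm (cosProfile N b) D i j k l := by
  simp only [psi, psiForm, cosProfile, ← Finset.sum_add_distrib, ← Finset.sum_sub_distrib,
    mul_neg, Finset.mul_sum, ← Finset.sum_neg_distrib]
  refine Finset.sum_congr rfl fun q _ => ?_
  have h := neg_eight_mul_ff hN hD hs ((q : ℕ) + 1)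
  simp only [psiForm] at h
  linear_combination ((-1) ^ ((q : ℕ) + 1) * b q) * h

def secondDiff (w : ℤ → ℝ) (a : ℤ) : ℝ := w (a + 2) - 2 * w (a + 1) + w a

theorem eq_of_secondDiff_eq_const {w : ℤ → ℝ} {c : ℝ} {M : ℤ}
    (h : ∀ a, 0 ≤ a → a + 2 ≤ M → secondDiff w a = 2 * c) :
    ∀ a, 0 ≤ a → a ≤ M → w a = w 0 + a * (w 1 - w 0) + a * (a - 1) * c := by
  suffices ∀ n : ℕ, (n : ℤ) ≤ M → w n = w 0 + n * (w 1 - w 0) + n * (n - 1) * c by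
    intro a ha haM
    lift a to ℕ using ha
    exact_mod_cast this a haM
  intro n
  induction n using Nat.twoStepInduction with
  | zero => intro; simp
  | one => intro; simp
  | more n ih₀ ih₁ =>
    intro hn
    have hstep := h n (by positivity) (by push_cast at hn; exact hn)
    rw [secondDiff] at hstep
    push_cast at ih₀ ih₁ hstep ⊢
    linear_combination hstep + 2 * ih₁ (by omega) - ih₀ (by omega)

section Recurrence

variable {t : ℤ} {w : ℤ → ℝ}

theorem secondDiff_eq_of_psiForm_eq_zero (hw : ∀ a, w (-a) = w a)
    (h₁ : ∀ n, 1 ≤ n → n ≤ t - 1 → psiForm w (2 * t) 0 (n + 1) (2 * t - n) (2 * t - 1) = 0)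
    (h₂ : ∀ m, (m = 1 ∨ 3 ≤ m ∧ m ≤ t + 1) →
      psiForm w (2 * t) (2 - m) m (2 * t - 1) (2 * t - 1) = 0) :
    ∀ a, 0 ≤ a → a ≤ 2 * t - 2 → secondDiff w a = 2 * (w 1 - w 0) := by
  have hTop : secondDiff w (2 * t - 2) = 2 * (w 1 - w 0) := by
    have h := h₂ 1 (Or.inl rfl)
    simp only [psiForm, secondDiff] at h ⊢
    linear_combination (norm := ring_nf) -h - hw (2 * t - 2)
  have hLow : ∀ a, 1 ≤ a → a ≤ t - 1 → secondDiff w a = secondDiff w (2 * t - 2) := by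
    intro a ha₁ ha
    have h := h₂ (a + 2) (Or.inr ⟨by omega, by omega⟩)
    simp only [psiForm, secondDiff] at h ⊢
    linear_combination (norm := ring_nf) h - hw a + 2 * hw (a + 1) + hw (2 * t - 2)
  have hPairSum : ∀ n, 0 ≤ n → n ≤ t - 1 →
      w (n + 1) - w n + w (2 * t - n) - w (2 * t - n - 1) =
        w 1 - w 0 + w (2 * t) - w (2 * t - 1) := by
    intro n hn₀ hn
    rcases eq_or_lt_of_le hn₀ with rfl | hn₁
    · ring_nf
    have h := h₁ n hn₁ hn
    simp only [psiForm] at h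
    linear_combination (norm := ring_nf) h + hw n + hw (2 * t - n - 1) + hw 1
  have hSymm : ∀ a, 0 ≤ a → a ≤ t - 2 → secondDiff w a = secondDiff w (2 * t - 2 - a) := by
    intro a ha₀ ha
    have h := hPairSum a ha₀ (by omega)
    have h' := hPairSum (a + 1) (by omega) (by omega)
    simp only [secondDiff]
    linear_combination (norm := ring_nf) h' - h
  -- `hLow` and `hTop` cover `[1, t - 1] ∪ {2t - 2}`; the reflection `a ↦ 2t - 2 - a` the rest.
  intro a ha₀ ha
  by_cases hmid : 1 ≤ a ∧ a ≤ t - 1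
  · rw [hLow a hmid.1 hmid.2, hTop]
  by_cases hend : a = 2 * t - 2
  · rw [hend, hTop]
  rcases eq_or_lt_of_le ha₀ with rfl | hpos
  · rw [hSymm 0 le_rfl (by omega), sub_zero, hTop]
  · have h := hSymm (2 * t - 2 - a) (by omega) (by omega)
    rw [sub_sub_cancel] at h
    rw [← h, hLow _ (by omega) (by omega), hTop]

end Recurrence

theorem eq_quadratic_of_psiForm_eq_zero {t : ℤ} {w : ℤ → ℝ} (hw : ∀ a, w (-a) = w a)
    (h₁ : ∀ n, 1 ≤ n → n ≤ t - 1 → psiForm w (2 * t) 0 (n + 1) (2 * t - n) (2 * t - 1) = 0)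
    (h₂ : ∀ m, (m = 1 ∨ 3 ≤ m ∧ m ≤ t + 1) →
      psiForm w (2 * t) (2 - m) m (2 * t - 1) (2 * t - 1) = 0) :
    ∀ a, |a| ≤ 2 * t → w a = w 0 + a ^ 2 * (w 1 - w 0) := by
  have hquad := eq_of_secondDiff_eq_const (M := 2 * t) fun a ha₀ ha =>
    secondDiff_eq_of_psiForm_eq_zero hw h₁ h₂ a ha₀ (by omega)
  intro a ha
  have hw_abs : w |a| = w a := by
    rcases abs_choice a with h | h <;> rw [h]
    exact hw a
  rw [← hw_abs, hquad |a| (abs_nonneg a) ha, Int.cast_abs]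
  linear_combination (w 1 - w 0) * sq_abs (a : ℝ)

theorem psiForm_eq_zero_of_eq_quadratic {w : ℤ → ℝ} {D : ℤ} {α β : ℝ}
    (hw : ∀ a, |a| ≤ D → w a = α + a ^ 2 * β) {i j k l : ℤ} (hi : -D < i) (hij : i ≤ j)
    (hjk : j ≤ k) (hkl : k ≤ l) (hl : l < D) (hs : i + j + k + l = 2 * D) :
    psiForm w D i j k l = 0 := by
  have hw' : ∀ a, -D ≤ a → a ≤ D → w a = α + a ^ 2 * β := fun a h₁ h₂ => hw a (abs_le.2 ⟨h₁, h₂⟩)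
  rw [psiForm, hw' i (by omega) (by omega), hw' j (by omega) (by omega),
    hw' k (by omega) (by omega), hw' l (by omega) (by omega), hw' D (by omega) le_rfl,
    hw' (i + j - D) (by omega) (by omega), hw' (i + k - D) (by omega) (by omega),
    hw' (i + l - D) (by omega) (by omega)]
  obtain rfl : l = 2 * D - i - j - k := by omega
  push_cast
  ring

theorem psi_zero_on_S_of_zero_on_S1_union_S2_ine_zero_general (N : ℕ) (hN4 : 4 ∣ N)
    (b : Fin (N / 2) → ℝ)
    (hb : ∀ x ∈ S1set N ∪ S2set N, psi N b x.1 x.2.1 x.2.2.1 x.2.2.2 = 0) :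
    ∀ x ∈ Sset N, x.1 ≠ 0 → psi N b x.1 x.2.1 x.2.2.1 x.2.2.2 = 0 := by
  obtain ⟨t, rfl⟩ := hN4
  rintro ⟨i, j, k, l⟩ ⟨hi, hij, hjk, hkl, hl, hs⟩ -
  have hhalf : ((4 * t : ℕ) : ℤ) / 2 = 2 * t := by omega
  have hN : 4 * t ≠ 0 := by omega
  have hD : ((4 * t : ℕ) : ℤ) = 2 * (2 * t) := by omega
  have hform : ∀ {i j k l : ℤ}, i + j + k + l = 4 * t → psi (4 * t) b i j k l = 0 →
      psiForm (cosProfile (4 * t) b) (2 * t) i j k l = 0 := fun hs h => by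
    rw [← eight_mul_psi hN b hD (by omega), h, mul_zero]
  have hquad := eq_quadratic_of_psiForm_eq_zero (cosProfile_neg _ b)
    (fun n hn₁ hn => hform (by ring)
      (hb (0, n + 1, 2 * t - n, 2 * t - 1) (Or.inl ⟨n, hn₁, by omega, by rw [hhalf]⟩)))
    (fun m hm => hform (by ring)
      (hb (2 - m, m, 2 * t - 1, 2 * t - 1) (Or.inr ⟨m, by omega, by rw [hhalf]⟩)))
  have h := eight_mul_psi hN b hD hs
  rw [psiForm_eq_zero_of_eq_quadratic hquad (by omega) hij hjk hkl (by omega) (by omega)] at h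
  simpa using h

theorem psi_zero_on_S_of_zero_on_S1_union_S2_ine_zero (N : ℕ) (hN4 : 4 ∣ N) (hN8 : 8 ≤ N)
    (b : Fin (N / 2) → ℝ)
    (hb : ∀ x ∈ S1set N ∪ S2set N, psi N b x.1 x.2.1 x.2.2.1 x.2.2.2 = 0) :
    ∀ x ∈ Sset N, x.1 ≠ 0 → psi N b x.1 x.2.1 x.2.2.1 x.2.2.2 = 0 :=
  psi_zero_on_S_of_zero_on_S1_union_S2_ine_zero_general N hN4 b hb
end

section
/- Let N ≥ 4 be an integer divisible by 4. For every integer s with 1 ≤ s ≤ N/4, one has 1/2 − ∑_{k=1}^{N/4−1} (4k/N − 1) cos(2πk(2s−1)/N) = 1/(N sin²((2s−1)π/N)). -/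
/-!
With `M = N / 4` and `θ = (2s - 1)π / N`, the sum is `-1/M` times the Fejér-type sum
`∑_{k=1}^{M} (M - k) cos (2kθ)`, and telescoping against the Dirichlet kernel gives
`2 sin²θ · ∑_{k=1}^{M} (M - k) cos (2kθ) = sin²(Mθ) - M sin²θ`.
Since `2Mθ = (2s - 1)π/2` is an odd multiple of `π/2`, `sin²(Mθ) = 1/2`, and the identity
follows by solving for the sum; it also forces `sin θ ≠ 0`.
-/

open Real Finset

namespace Real

theorem sin_sq_sub_sin_sq (x y : ℝ) : sin x ^ 2 - sin y ^ 2 = sin (x + y) * sin (x - y) := by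
  have h := two_mul_sin_mul_sin (x + y) (x - y)
  rw [show x + y - (x - y) = 2 * y by ring, show x + y + (x - y) = 2 * x by ring] at h
  rw [sin_sq_eq_half_sub, sin_sq_eq_half_sub]
  linarith

theorem two_mul_sin_mul_sum_Icc_cos_two_mul (θ : ℝ) (n : ℕ) :
    2 * sin θ * ∑ k ∈ Icc 1 n, cos (2 * k * θ) = sin ((2 * n + 1) * θ) - sin θ := by
  induction n with
  | zero => simp
  | succ n ih =>
    rw [sum_Icc_succ_top (by omega), mul_add, ih, two_mul_sin_mul_cos]
    push_cast
    rw [show θ - 2 * (n + 1) * θ = -((2 * n + 1) * θ) by ring, sin_neg]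
    ring_nf

theorem two_mul_sin_sq_mul_sum_Icc_sub_mul_cos_two_mul (θ : ℝ) (n : ℕ) :
    2 * sin θ ^ 2 * ∑ k ∈ Icc 1 n, ((n : ℝ) - k) * cos (2 * k * θ)
      = sin (n * θ) ^ 2 - n * sin θ ^ 2 := by
  induction n with
  | zero => simp
  | succ n ih =>
    have hsplit : ∑ k ∈ Icc 1 (n + 1), (((n + 1 : ℕ) : ℝ) - k) * cos (2 * k * θ)
        = ∑ k ∈ Icc 1 n, ((n : ℝ) - k) * cos (2 * k * θ) + ∑ k ∈ Icc 1 n, cos (2 * k * θ) := by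
      rw [sum_Icc_succ_top (by omega), sub_self, zero_mul, add_zero, ← sum_add_distrib]
      refine sum_congr rfl fun k _ => ?_
      push_cast
      ring
    have hdirichlet := two_mul_sin_mul_sum_Icc_cos_two_mul θ n
    have hstep := sin_sq_sub_sin_sq ((n + 1) * θ) (n * θ)
    rw [show (n + 1) * θ + n * θ = (2 * n + 1) * θ by ring,
      show (n + 1) * θ - n * θ = θ by ring] at hstep
    rw [hsplit]
    push_cast
    linear_combination ih + sin θ * hdirichlet - hstep

theorem one_div_two_sub_sum_Icc_eq_one_div_of_cos_eq_zero (M : ℕ) (θ : ℝ)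
    (h : cos (2 * M * θ) = 0) :
    1 / 2 - ∑ k ∈ Icc 1 (M - 1), ((k : ℝ) / M - 1) * cos (2 * k * θ)
      = 1 / (4 * M * sin θ ^ 2) := by
  have hM : (M : ℝ) ≠ 0 := by
    rintro hM
    simp [hM] at h
  have hhalf : sin (M * θ) ^ 2 = 1 / 2 := by
    rw [sin_sq_eq_half_sub, ← mul_assoc, h]
    norm_num
  have hfejer := two_mul_sin_sq_mul_sum_Icc_sub_mul_cos_two_mul θ M
  rw [hhalf] at hfejer
  have hsin : sin θ ≠ 0 := by
    rintro h0
    rw [h0] at hfejer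
    norm_num at hfejer
  have hsum : ∑ k ∈ Icc 1 (M - 1), ((k : ℝ) / M - 1) * cos (2 * k * θ)
      = -(1 / M) * ∑ k ∈ Icc 1 M, ((M : ℝ) - k) * cos (2 * k * θ) := by
    rw [mul_sum]
    refine (sum_subset (Icc_subset_Icc_right (Nat.sub_le M 1)) fun k hk hk' => ?_).trans
      (sum_congr rfl fun k _ => ?_)
    · obtain rfl : k = M := by
        simp only [mem_Icc] at hk hk'
        omega
      rw [div_self hM, sub_self, zero_mul]
    · field_simp
      ring
  rw [hsum]
  field_simp
  linear_combination 4 * hfejer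

end Real

theorem sum_identity_odd_inverse_general (N : ℕ) (hN4 : 4 ∣ N) (hN : 4 ≤ N)
    (s : ℕ) :
    (1 / 2 : ℝ) - ∑ k ∈ Finset.Icc 1 (N / 4 - 1),
        (4 * (k : ℝ) / N - 1) * Real.cos (2 * Real.pi * k * (2 * (s : ℝ) - 1) / N)
      = 1 / ((N : ℝ) * Real.sin ((2 * (s : ℝ) - 1) * Real.pi / N) ^ 2) := by
  obtain ⟨M, rfl⟩ := hN4
  have hM : (M : ℝ) ≠ 0 := by norm_cast; omega
  have hcos : cos (2 * M * ((2 * s - 1) * π / (4 * M))) = 0 := by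
    rw [cos_eq_zero_iff]
    refine ⟨(s : ℤ) - 1, ?_⟩
    push_cast
    field_simp
    ring
  rw [Nat.mul_div_cancel_left M (by norm_num)]
  push_cast
  convert one_div_two_sub_sum_Icc_eq_one_div_of_cos_eq_zero M _ hcos using 3
  rw [mul_div_mul_left _ _ four_ne_zero]
  ring_nf

theorem sum_identity_odd_inverse (N : ℕ) (hN4 : 4 ∣ N) (hN : 4 ≤ N)
    (s : ℕ) (hs1 : 1 ≤ s) (hs2 : s ≤ N / 4) :
    (1 / 2 : ℝ) - ∑ k ∈ Finset.Icc 1 (N / 4 - 1),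
        (4 * (k : ℝ) / N - 1) * Real.cos (2 * Real.pi * k * (2 * (s : ℝ) - 1) / N)
      = 1 / ((N : ℝ) * Real.sin ((2 * (s : ℝ) - 1) * Real.pi / N) ^ 2) :=
  sum_identity_odd_inverse_general N hN4 hN s
end
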